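/- arXiv:2604.01743 — 2 statements merged into one kernel-verified Lean document; each statement's English description precedes it below -/
import Mathlib

section
/- For the 6-dimensional Lotka-Volterra system with antisymmetric matrix A having upper entries A_{12}=a₁, A_{1j}=A_{2j}=b₁ for j=3,4,5, A_{16}=A_{26}=c₁, A_{34}=a₂, A_{35}=a₃, A_{45}=a₄, A_{36}=A_{46}=A_{56}=a₅, the two functions F₁ = (x₁+x₂)^{a₅}(x₃+x₄+x₅)^{-c₁} x₆^{b₁} and F₂ = x₃^{-a₄} x₄^{a₃} x₅^{-a₂}(x₃+x₄+x₅)^{a₂-a₃+a₄} are both constants of motion of ẋ_i = x_i(Ax)_i and they Poisson commute: {F₁,F₂} = 0 with respect to the bracket {x_i,x_j} = A_{ij}x_ix_j. -/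
open Real Finset

/-- i-th component of the gradient of `F` at `x`. -/
noncomputable def grad {n : ℕ} (F : (Fin n → ℝ) → ℝ) (x : Fin n → ℝ) (i : Fin n) : ℝ :=
  fderiv ℝ F x (Pi.single i 1)

/-- Lie derivative (directional derivative) of `F` along the vector field `f` at `x`. -/
noncomputable def lieDeriv {n : ℕ} (F : (Fin n → ℝ) → ℝ) (f : (Fin n → ℝ) → Fin n → ℝ)
    (x : Fin n → ℝ) : ℝ := ∑ i, grad F x i * f x i

/-- The Poisson bracket {F,G}(x) = Σ_{i,j} A_{ij} x_i x_j ∂_iF ∂_jG. -/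
noncomputable def pbracket {n : ℕ} (A : Matrix (Fin n) (Fin n) ℝ)
    (F G : (Fin n → ℝ) → ℝ) (x : Fin n → ℝ) : ℝ :=
  ∑ i, ∑ j, A i j * x i * x j * grad F x i * grad G x j

/-- The (possibly inhomogeneous) Lotka-Volterra vector field
`f_i(x) = x_i (r_i + Σ_j A_{ij} x_j)`. -/
def lvField {n : ℕ} (A : Matrix (Fin n) (Fin n) ℝ) (r : Fin n → ℝ)
    (x : Fin n → ℝ) (i : Fin n) : ℝ := x i * (r i + ∑ j, A i j * x j)

/-! Both functions are products of real powers of linear forms, so their gradients are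
`∂ᵢF = F · Lᵢ` with `L = d(log F)` a sum of terms `(e / ℓ(x)) • ℓ`. Hence the Lie derivative
along the Lotka–Volterra field is `F · Σᵢⱼ Aᵢⱼ (xᵢ Lᵢ) xⱼ` and the bracket is
`F₁ F₂ · Σᵢⱼ Aᵢⱼ (xᵢ Lᵢ) (xⱼ Mⱼ)`; for the given block structure of `A` these are rational
functions of `x` that vanish identically. -/

def HasLogFDerivAt {E : Type*} [NormedAddCommGroup E] [NormedSpace ℝ E]
    (F : E → ℝ) (L : E →L[ℝ] ℝ) (x : E) : Prop :=
  HasFDerivAt F (F x • L) x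

section LogDeriv

variable {E : Type*} [NormedAddCommGroup E] [NormedSpace ℝ E] {F G : E → ℝ} {L M : E →L[ℝ] ℝ}
  {x : E}

theorem HasLogFDerivAt.mul (hF : HasLogFDerivAt F L x) (hG : HasLogFDerivAt G M x) :
    HasLogFDerivAt (fun y => F y * G y) (L + M) x := by
  refine (HasFDerivAt.fun_mul hF hG).congr_fderiv ?_
  ext v
  simp only [add_apply, smul_apply, smul_eq_mul]
  ring

theorem ContinuousLinearMap.hasLogFDerivAt_rpow (ℓ : E →L[ℝ] ℝ) (e : ℝ) (hx : ℓ x ≠ 0) :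
    HasLogFDerivAt (fun y => ℓ y ^ e) ((e / ℓ x) • ℓ) x := by
  unfold HasLogFDerivAt
  convert ℓ.hasFDerivAt.rpow_const (p := e) (Or.inl hx) using 1
  rw [smul_smul, Real.rpow_sub_one hx]
  congr 1
  simp only
  ring

end LogDeriv

section LotkaVolterra

variable {n : ℕ} {A : Matrix (Fin n) (Fin n) ℝ} {F G : (Fin n → ℝ) → ℝ}
  {L M : (Fin n → ℝ) →L[ℝ] ℝ} {x : Fin n → ℝ}

theorem HasLogFDerivAt.grad_eq (hF : HasLogFDerivAt F L x) (i : Fin n) :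
    grad F x i = F x * L (Pi.single i 1) := by
  rw [grad, hF.fderiv, smul_apply, smul_eq_mul]

theorem lieDeriv_lvField_eq_of_hasLogFDerivAt (hF : HasLogFDerivAt F L x) :
    lieDeriv F (lvField A 0) x =
      F x * ∑ i, ∑ j, A i j * (x i * L (Pi.single i 1)) * x j := by
  simp only [lieDeriv, lvField, hF.grad_eq, Pi.zero_apply, zero_add, Finset.mul_sum]
  refine Finset.sum_congr rfl fun i _ => Finset.sum_congr rfl fun j _ => ?_
  ring

theorem pbracket_eq_of_hasLogFDerivAt (hF : HasLogFDerivAt F L x) (hG : HasLogFDerivAt G M x) :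
    pbracket A F G x =
      F x * G x * ∑ i, ∑ j, A i j * (x i * L (Pi.single i 1)) * (x j * M (Pi.single j 1)) := by
  simp only [pbracket, hF.grad_eq, hG.grad_eq, Finset.mul_sum]
  refine Finset.sum_congr rfl fun i _ => Finset.sum_congr rfl fun j _ => ?_
  ring

end LotkaVolterra

/-- for the 6-dim LV system of type [1,1,0], the two given functions
are constants of motion and Poisson commute. -/
theorem stmt9 (a₁ a₂ a₃ a₄ a₅ b₁ c₁ : ℝ) :
    let A : Matrix (Fin 6) (Fin 6) ℝ :=
      !![0, a₁, b₁, b₁, b₁, c₁;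
         -a₁, 0, b₁, b₁, b₁, c₁;
         -b₁, -b₁, 0, a₂, a₃, a₅;
         -b₁, -b₁, -a₂, 0, a₄, a₅;
         -b₁, -b₁, -a₃, -a₄, 0, a₅;
         -c₁, -c₁, -a₅, -a₅, -a₅, 0]
    let F₁ : (Fin 6 → ℝ) → ℝ :=
      fun x => (x 0 + x 1) ^ a₅ * (x 2 + x 3 + x 4) ^ (-c₁) * x 5 ^ b₁
    let F₂ : (Fin 6 → ℝ) → ℝ :=
      fun x => x 2 ^ (-a₄) * x 3 ^ a₃ * x 4 ^ (-a₂) * (x 2 + x 3 + x 4) ^ (a₂ - a₃ + a₄)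
    ∀ x : Fin 6 → ℝ, (∀ i, 0 < x i) →
      lieDeriv F₁ (lvField A 0) x = 0 ∧
      lieDeriv F₂ (lvField A 0) x = 0 ∧
      pbracket A F₁ F₂ x = 0 := by
  intro A F₁ F₂ x hx
  let p (i : Fin 6) : (Fin 6 → ℝ) →L[ℝ] ℝ := ContinuousLinearMap.proj i
  have h01 : x 0 + x 1 ≠ 0 := by linarith [hx 0, hx 1]
  have h234 : x 2 + x 3 + x 4 ≠ 0 := by linarith [hx 2, hx 3, hx 4]
  have hF₁ : HasLogFDerivAt F₁ _ x :=
    (((p 0 + p 1).hasLogFDerivAt_rpow (x := x) a₅ h01).mul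
      ((p 2 + p 3 + p 4).hasLogFDerivAt_rpow (x := x) (-c₁) h234)).mul
      ((p 5).hasLogFDerivAt_rpow (x := x) b₁ (hx 5).ne')
  have hF₂ : HasLogFDerivAt F₂ _ x :=
    ((((p 2).hasLogFDerivAt_rpow (x := x) (-a₄) (hx 2).ne').mul
      ((p 3).hasLogFDerivAt_rpow (x := x) a₃ (hx 3).ne')).mul
      ((p 4).hasLogFDerivAt_rpow (x := x) (-a₂) (hx 4).ne')).mul
      ((p 2 + p 3 + p 4).hasLogFDerivAt_rpow (x := x) (a₂ - a₃ + a₄) h234)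
  rw [lieDeriv_lvField_eq_of_hasLogFDerivAt hF₁, lieDeriv_lvField_eq_of_hasLogFDerivAt hF₂,
    pbracket_eq_of_hasLogFDerivAt hF₁ hF₂]
  have := (hx 2).ne'; have := (hx 3).ne'; have := (hx 4).ne'; have := (hx 5).ne'
  refine ⟨mul_eq_zero_of_right _ ?_, mul_eq_zero_of_right _ ?_, mul_eq_zero_of_right _ ?_⟩ <;>
    simp only [A, p, Fin.sum_univ_six, Matrix.of_apply, Matrix.cons_val', Matrix.cons_val_fin_one,
      Matrix.cons_val_zero, Matrix.cons_val_one, Matrix.cons_val, ContinuousLinearMap.proj_apply,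
      add_apply, smul_apply, Pi.single_apply, smul_eq_mul, Fin.reduceEq, ↓reduceIte, mul_one,
      mul_zero, add_zero, zero_add, zero_mul, neg_mul] <;>
    field_simp <;>
    ring
end

section
/- For the 2(j+1)-dimensional Lotka-Volterra system with antisymmetric matrix A built from blocks J_i = [[0,a_i],[-a_i,0]] on the diagonal, off-diagonal 2×2 blocks K^i_k = ((b_i c_k − b_k c_i)/a_{j+1})·1 (all-ones matrix) for 1≤i<k≤j, and last block column L with rows (b_i, c_i) repeated twice, the j functions F_i = (x_{2i−1}+x_{2i})^{a_{j+1}} x_{n−1}^{−c_i} x_n^{b_i} (n = 2j+2) are constants of motion, assuming a_{j+1} ≠ 0. -/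
open Real Finset

/-- The antisymmetric matrix of the even-dimensional type [j,0,0] LV system:
diagonal 2×2 blocks J_p = [[0,a_p],[-a_p,0]] (p = 1,…,j), off-diagonal 2×2 blocks
K^p_q = ((b_p c_q − b_q c_p)/a_{j+1})·𝟙 for p < q, last block column L with rows
(b_p, c_p) repeated twice, and final diagonal block J_{j+1} (parameters 1-based). -/
noncomputable def typeJ00Mat (j : ℕ) (a b c : ℕ → ℝ) :
    Matrix (Fin (2 * (j + 1))) (Fin (2 * (j + 1))) ℝ :=
  Matrix.of fun r s =>
    let R := r.val; let S := s.val
    if R = S then 0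
    else if R < 2 * j ∧ S < 2 * j then
      (if R / 2 = S / 2 then (if R < S then a (R / 2 + 1) else -a (R / 2 + 1))
       else (b (R / 2 + 1) * c (S / 2 + 1) - b (S / 2 + 1) * c (R / 2 + 1)) / a (j + 1))
    else if R < 2 * j then (if S = 2 * j then b (R / 2 + 1) else c (R / 2 + 1))
    else if S < 2 * j then -(if R = 2 * j then b (S / 2 + 1) else c (S / 2 + 1))
    else (if R < S then a (j + 1) else -a (j + 1))

/-- The integral F_i = (x_{2i−1}+x_{2i})^{a_{j+1}} x_{n−1}^{−c_i} x_n^{b_i}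
of the type [j,0,0] system, for i = 1,…,j (here i : Fin j is 0-based). -/
noncomputable def typeJ00F (j : ℕ) (a b c : ℕ → ℝ) (i : Fin j)
    (y : Fin (2 * (j + 1)) → ℝ) : ℝ :=
  (y ⟨2 * i.val, by have := i.isLt; omega⟩ + y ⟨2 * i.val + 1, by have := i.isLt; omega⟩)
      ^ a (j + 1)
    * (y ⟨2 * j, by omega⟩) ^ (-(c (i.val + 1)))
    * (y ⟨2 * j + 1, by omega⟩) ^ (b (i.val + 1))

/-!
Write `u_k = x_{2k-1} + x_{2k}` and `α = a_{j+1}`. Along the flow, `log F_i` changes at rate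
`α u̇_i / u_i - c_i ẋ_{n-1} / x_{n-1} + b_i ẋ_n / x_n`. In `u̇_i` the two `J_i` terms cancel, so
`u̇_i / u_i` is the common value `Σ_k K^i_k u_k + b_i x_{n-1} + c_i x_n` of the rows `2i-1` and
`2i` (the term `k = i` vanishes since `K^i_i = 0`), while `ẋ_{n-1} / x_{n-1}` and `ẋ_n / x_n` are
`-Σ_k b_k u_k + α x_n` and `-Σ_k c_k u_k - α x_{n-1}`. As `α K^i_k = b_i c_k - b_k c_i`, the
rate vanishes.
-/

/-- The coordinate `2q + δ` (0-based), i.e. the paper's coordinate `2q + δ + 1`. -/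
def pairIdx {m : ℕ} (q : Fin m) (δ : Fin 2) : Fin (2 * m) := ⟨2 * q + δ, by omega⟩

def pairSum {m : ℕ} (x : Fin (2 * m) → ℝ) (q : Fin m) : ℝ := x (pairIdx q 0) + x (pairIdx q 1)

theorem sum_fin_two_mul_eq_sum_pairIdx {M : Type*} [AddCommMonoid M] {m : ℕ}
    (g : Fin (2 * m) → M) : ∑ k, g k = ∑ q, ∑ δ, g (pairIdx q δ) := by
  rw [← Fintype.sum_prod_type']
  refine (Fintype.sum_equiv (finProdFinEquiv.trans (finCongr (mul_comm m 2))) _ _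
    fun p => ?_).symm
  congr 1
  ext
  simp [pairIdx, finProdFinEquiv]
  ring

theorem lieDeriv_eq_fderiv {n : ℕ} (F : (Fin n → ℝ) → ℝ) (f : (Fin n → ℝ) → Fin n → ℝ)
    (x : Fin n → ℝ) : lieDeriv F f x = fderiv ℝ F x (f x) := by
  conv_rhs => rw [pi_eq_sum_univ' (f x)]
  simp only [lieDeriv, grad, map_sum, map_smul, smul_eq_mul, mul_comm]

theorem lvField_zero_apply {n : ℕ} (A : Matrix (Fin n) (Fin n) ℝ) (x : Fin n → ℝ) (k : Fin n) :
    lvField A 0 x k = x k * A.mulVec x k := by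
  simp [lvField, Matrix.mulVec, dotProduct]

theorem fderiv_rpow_mul_rpow_mul_rpow_apply {E : Type*} [NormedAddCommGroup E] [NormedSpace ℝ E]
    {g₁ g₂ g₃ : E → ℝ} {g₁' g₂' g₃' : E →L[ℝ] ℝ} {x : E} (h₁ : HasFDerivAt g₁ g₁' x)
    (h₂ : HasFDerivAt g₂ g₂' x) (h₃ : HasFDerivAt g₃ g₃' x) (hg₁ : 0 < g₁ x) (hg₂ : 0 < g₂ x)
    (hg₃ : 0 < g₃ x) (e₁ e₂ e₃ : ℝ) (v : E) :
    fderiv ℝ (fun y => g₁ y ^ e₁ * g₂ y ^ e₂ * g₃ y ^ e₃) x v =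
      g₁ x ^ e₁ * g₂ x ^ e₂ * g₃ x ^ e₃ *
        (e₁ * (g₁' v / g₁ x) + e₂ * (g₂' v / g₂ x) + e₃ * (g₃' v / g₃ x)) := by
  have h : HasFDerivAt (fun y => g₁ y ^ e₁ * g₂ y ^ e₂ * g₃ y ^ e₃) _ x :=
    ((h₁.rpow_const (.inl hg₁.ne')).mul (h₂.rpow_const (.inl hg₂.ne'))).mul
      (h₃.rpow_const (.inl hg₃.ne'))
  rw [h.fderiv]
  simp only [add_apply, smul_apply, smul_eq_mul, Pi.mul_apply,
    Real.rpow_sub_one hg₁.ne', Real.rpow_sub_one hg₂.ne', Real.rpow_sub_one hg₃.ne']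
  ring

section TypeJ00

open Matrix

variable {j : ℕ} {a b c : ℕ → ℝ}

theorem typeJ00Mat_pairIdx_self (p : Fin (j + 1)) (ε δ : Fin 2) :
    typeJ00Mat j a b c (pairIdx p ε) (pairIdx p δ) = !![0, a (p + 1); -a (p + 1), 0] ε δ := by
  have := p.isLt
  have hp : (2 * p + 1 : ℕ) / 2 = p := by omega
  fin_cases ε <;> fin_cases δ <;> simp [typeJ00Mat, pairIdx, hp] <;> split_ifs <;>
    first | rfl | omega | (intro; rw [show (p : ℕ) = j by omega])

theorem typeJ00Mat_pairIdx_castSucc_of_ne {p q : Fin j} (h : p ≠ q) (ε δ : Fin 2) :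
    typeJ00Mat j a b c (pairIdx p.castSucc ε) (pairIdx q.castSucc δ) =
      (b (p + 1) * c (q + 1) - b (q + 1) * c (p + 1)) / a (j + 1) := by
  have := Fin.val_ne_of_ne h
  have hp : (2 * p + ε : ℕ) / 2 = p := by omega
  have hq : (2 * q + δ : ℕ) / 2 = q := by omega
  simp only [typeJ00Mat, pairIdx, of_apply, Fin.val_castSucc, hp, hq]
  split_ifs <;> first | rfl | omega

theorem typeJ00Mat_pairIdx_castSucc_last (p : Fin j) (ε δ : Fin 2) :
    typeJ00Mat j a b c (pairIdx p.castSucc ε) (pairIdx (Fin.last j) δ) =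
      ![b (p + 1), c (p + 1)] δ := by
  have hp : (2 * p + ε : ℕ) / 2 = p := by omega
  fin_cases δ <;> simp [typeJ00Mat, pairIdx, hp] <;> split_ifs <;> first | rfl | omega

theorem typeJ00Mat_pairIdx_last_castSucc (q : Fin j) (ε δ : Fin 2) :
    typeJ00Mat j a b c (pairIdx (Fin.last j) ε) (pairIdx q.castSucc δ) =
      -![b (q + 1), c (q + 1)] ε := by
  have hq : (2 * q + δ : ℕ) / 2 = q := by omega
  fin_cases ε <;> simp [typeJ00Mat, pairIdx, hq] <;> split_ifs <;> first | rfl | omega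

theorem typeJ00Mat_mulVec_pairIdx_castSucc (x : Fin (2 * (j + 1)) → ℝ) (i : Fin j)
    (ε : Fin 2) :
    (typeJ00Mat j a b c *ᵥ x) (pairIdx i.castSucc ε) =
      ∑ q : Fin j, (b (i + 1) * c (q + 1) - b (q + 1) * c (i + 1)) / a (j + 1) *
          pairSum x q.castSucc +
        ∑ δ, !![0, a (i + 1); -a (i + 1), 0] ε δ * x (pairIdx i.castSucc δ) +
        ∑ δ, ![b (i + 1), c (i + 1)] δ * x (pairIdx (Fin.last j) δ) := by
  have hblock : ∀ q : Fin j,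
      ∑ δ, typeJ00Mat j a b c (pairIdx i.castSucc ε) (pairIdx q.castSucc δ) *
          x (pairIdx q.castSucc δ) =
        (b (i + 1) * c (q + 1) - b (q + 1) * c (i + 1)) / a (j + 1) * pairSum x q.castSucc +
          if q = i then ∑ δ, !![0, a (i + 1); -a (i + 1), 0] ε δ * x (pairIdx i.castSucc δ)
          else 0 := by
    intro q
    by_cases hq : q = i
    · subst hq
      simp [typeJ00Mat_pairIdx_self]
    · simp only [typeJ00Mat_pairIdx_castSucc_of_ne (Ne.symm hq), hq, if_false, add_zero,
        Fin.sum_univ_two, pairSum, mul_add]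
  rw [mulVec, dotProduct, sum_fin_two_mul_eq_sum_pairIdx, Fin.sum_univ_castSucc]
  simp only [hblock, Finset.sum_add_distrib, Finset.sum_ite_eq', Finset.mem_univ, if_true,
    typeJ00Mat_pairIdx_castSucc_last]

theorem typeJ00Mat_mulVec_pairIdx_last (x : Fin (2 * (j + 1)) → ℝ) (ε : Fin 2) :
    (typeJ00Mat j a b c *ᵥ x) (pairIdx (Fin.last j) ε) =
      -∑ q : Fin j, ![b (q + 1), c (q + 1)] ε * pairSum x q.castSucc +
        ∑ δ, !![0, a (j + 1); -a (j + 1), 0] ε δ * x (pairIdx (Fin.last j) δ) := by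
  rw [mulVec, dotProduct, sum_fin_two_mul_eq_sum_pairIdx, Fin.sum_univ_castSucc]
  simp only [typeJ00Mat_pairIdx_last_castSucc, typeJ00Mat_pairIdx_self, Fin.sum_univ_two,
    pairSum, Finset.sum_neg_distrib, neg_mul, mul_add, Fin.val_last]

theorem typeJ00Mat_mulVec_pair_rows (ha : a (j + 1) ≠ 0) (i : Fin j)
    (x : Fin (2 * (j + 1)) → ℝ) :
    a (j + 1) * (x (pairIdx i.castSucc 0) * (typeJ00Mat j a b c *ᵥ x) (pairIdx i.castSucc 0) +
        x (pairIdx i.castSucc 1) * (typeJ00Mat j a b c *ᵥ x) (pairIdx i.castSucc 1)) =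
      (x (pairIdx i.castSucc 0) + x (pairIdx i.castSucc 1)) *
        (c (i + 1) * (typeJ00Mat j a b c *ᵥ x) (pairIdx (Fin.last j) 0) -
          b (i + 1) * (typeJ00Mat j a b c *ᵥ x) (pairIdx (Fin.last j) 1)) := by
  have hcoupling : a (j + 1) * ∑ q : Fin j,
      (b (i + 1) * c (q + 1) - b (q + 1) * c (i + 1)) / a (j + 1) * pairSum x q.castSucc =
        b (i + 1) * ∑ q : Fin j, c (q + 1) * pairSum x q.castSucc -
          c (i + 1) * ∑ q : Fin j, b (q + 1) * pairSum x q.castSucc := by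
    simp only [Finset.mul_sum, ← Finset.sum_sub_distrib]
    refine Finset.sum_congr rfl fun q _ => ?_
    field_simp
  simp only [typeJ00Mat_mulVec_pairIdx_castSucc, typeJ00Mat_mulVec_pairIdx_last,
    Fin.sum_univ_two, of_apply, cons_val', cons_val_zero, cons_val_one, empty_val',
    cons_val_fin_one]
  linear_combination (x (pairIdx i.castSucc 0) + x (pairIdx i.castSucc 1)) * hcoupling

theorem typeJ00F_eq (i : Fin j) :
    typeJ00F j a b c i = fun y =>
      (y (pairIdx i.castSucc 0) + y (pairIdx i.castSucc 1)) ^ a (j + 1) *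
        y (pairIdx (Fin.last j) 0) ^ (-c (i + 1)) * y (pairIdx (Fin.last j) 1) ^ b (i + 1) :=
  rfl

end TypeJ00

/-- the j functions F_i are constants of motion of the homogeneous
type [j,0,0] Lotka-Volterra system (a_{j+1} ≠ 0). -/
theorem stmt12 (j : ℕ) (a b c : ℕ → ℝ) (ha : a (j + 1) ≠ 0) (i : Fin j) :
    ∀ x : Fin (2 * (j + 1)) → ℝ, (∀ k, 0 < x k) →
      lieDeriv (typeJ00F j a b c i) (lvField (typeJ00Mat j a b c) 0) x = 0 := by
  intro x hx
  have hu : 0 < x (pairIdx i.castSucc 0) + x (pairIdx i.castSucc 1) := add_pos (hx _) (hx _)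
  rw [lieDeriv_eq_fderiv, typeJ00F_eq, fderiv_rpow_mul_rpow_mul_rpow_apply
    ((hasFDerivAt_apply _ x).fun_add (hasFDerivAt_apply _ x)) (hasFDerivAt_apply _ x)
    (hasFDerivAt_apply _ x) hu (hx _) (hx _)]
  simp only [add_apply, ContinuousLinearMap.proj_apply, lvField_zero_apply,
    mul_div_cancel_left₀ _ (hx _).ne']
  rw [mul_div_assoc', typeJ00Mat_mulVec_pair_rows ha, mul_div_cancel_left₀ _ hu.ne']
  ring
end
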